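/- For every integer a ≥ 5 and every integer w ≥ 0, the number of 2^a-multipartitions satisfies k(2^a, w) ≤ 2^((a − 4/3)w + 2). -/

import Mathlib

/-!
Peeling off one component at a time gives `k(s + 1, w) = ∑ₘ p(m) k(s, w - m)`, and `p(m)` is at
most the number `2 ^ (m - 1)` of compositions of `m`. Hence `k(s, w) ≤ f_w`, the `w`-th
coefficient of `F = G ^ s` with `G = (1 - X) / (1 - 2X)`. Since `(1 - X)(1 - 2X) G' = G`, the
series `F` satisfies `(1 - X)(1 - 2X) F' = s F`, which yields `(w + 1) f_{w+1} ≤ (s + 3w) f_w`.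
For `s ≥ 32` and `c = 2 ^ (4/3)` the ratio `c (s + 3w) / ((w + 1) s)` is at most `1` once
`w ≥ 2`, so `f_w (c / s) ^ w` is largest for some `w ≤ 2`, where it is below `4`.
-/

open PowerSeries Finset

/-- The number of `s`-multipartitions of `t`: tuples of `s` partitions whose sizes sum to `t`. -/
noncomputable def multipartitions (s t : ℕ) : ℕ :=
  Nat.card {f : Fin s → Σ n : ℕ, Nat.Partition n // ∑ i, (f i).1 = t}

abbrev Multipartition (s t : ℕ) := {f : Fin s → Σ n : ℕ, Nat.Partition n // ∑ i, (f i).1 = t}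

def multipartitionSuccEquiv (s w : ℕ) :
    Multipartition (s + 1) w ≃ Σ m : Fin (w + 1), Nat.Partition m × Multipartition s (w - m) where
  toFun f := ⟨⟨(f.1 0).1, by have := f.2; rw [Fin.sum_univ_succ] at this; omega⟩,
    (f.1 0).2, ⟨Fin.tail f.1, by
      have := f.2
      rw [Fin.sum_univ_succ] at this
      simp only [Fin.tail]
      omega⟩⟩
  invFun q := ⟨Fin.cons ⟨q.1, q.2.1⟩ q.2.2.1, by
    have := q.2.2.2
    have := q.1.2
    rw [Fin.sum_univ_succ]
    simp only [Fin.cons_zero, Fin.cons_succ]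
    omega⟩
  left_inv f := by simp
  right_inv := fun ⟨_, _, _⟩ => rfl

instance (s w : ℕ) : Finite (Multipartition s w) := by
  induction s generalizing w with
  | zero => exact Finite.of_subsingleton
  | succ s _ => exact Finite.of_equiv _ (multipartitionSuccEquiv s w).symm

theorem multipartitions_succ (s w : ℕ) :
    multipartitions (s + 1) w =
      ∑ m ∈ range (w + 1), Fintype.card (Nat.Partition m) * multipartitions s (w - m) := by
  rw [multipartitions, Nat.card_congr (multipartitionSuccEquiv s w), Nat.card_sigma,
    ← Fin.sum_univ_eq_sum_range
      (fun m => Fintype.card (Nat.Partition m) * multipartitions s (w - m))]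
  simp [Nat.card_prod, multipartitions]

theorem card_partition_le (n : ℕ) : Fintype.card (Nat.Partition n) ≤ 2 ^ (n - 1) :=
  composition_card n ▸ Fintype.card_le_of_surjective _ Nat.Partition.ofComposition_surj

/-- `(1 - X) / (1 - 2X)`, the generating function of compositions (`2 ^ (0 - 1) = 1`). -/
noncomputable def compositionSeries : ℕ⟦X⟧ := mk fun n => 2 ^ (n - 1)

theorem constantCoeff_compositionSeries : constantCoeff compositionSeries = 1 := rfl

theorem multipartitions_le_coeff_pow (s w : ℕ) :
    multipartitions s w ≤ coeff w (compositionSeries ^ s) := by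
  induction s generalizing w with
  | zero =>
    rcases w with _ | w
    · simp [multipartitions]
    · have : IsEmpty (Multipartition 0 (w + 1)) := ⟨fun f => by simpa using f.2⟩
      simp [multipartitions, coeff_one]
  | succ s ih =>
    rw [multipartitions_succ, pow_succ', coeff_mul, Finset.Nat.sum_antidiagonal_eq_sum_range_succ
      (fun i j => coeff i compositionSeries * coeff j (compositionSeries ^ s))]
    exact sum_le_sum fun m _ =>
      Nat.mul_le_mul (by simpa [compositionSeries] using card_partition_le m) (ih _)

/-- `(1 - X)(1 - 2X) G' = G`, rearranged so that no subtraction occurs. -/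
theorem compositionSeries_ode :
    (1 + C 2 * X ^ 2) * d⁄dX ℕ compositionSeries =
      compositionSeries + C 3 * X * d⁄dX ℕ compositionSeries := by
  ext n
  simp only [add_mul, one_mul, map_add, mul_assoc, coeff_C_mul, coeff_X_pow_mul',
    coeff_derivative, compositionSeries, coeff_mk]
  rcases n with _ | _ | n
  · simp [coeff_zero_X_mul, -coeff_zero_eq_constantCoeff]
  · simp [coeff_derivative]
  · simp [coeff_derivative, pow_succ]
    ring

theorem compositionSeries_pow_ode (s : ℕ) :
    (1 + C 2 * X ^ 2) * d⁄dX ℕ (compositionSeries ^ s) =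
      C s * compositionSeries ^ s + C 3 * X * d⁄dX ℕ (compositionSeries ^ s) := by
  rcases s with _ | s
  · simp
  · rw [derivative_pow, Nat.add_sub_cancel,
      show ((s + 1 : ℕ) : ℕ⟦X⟧) = C (s + 1) from (map_natCast C _).symm,
      show (1 + C 2 * X ^ 2) * (C (s + 1) * compositionSeries ^ s * d⁄dX ℕ compositionSeries) =
        C (s + 1) * compositionSeries ^ s * ((1 + C 2 * X ^ 2) * d⁄dX ℕ compositionSeries) by ring,
      compositionSeries_ode]
    ring

theorem succ_mul_coeff_succ_le {F : ℕ⟦X⟧} {s : ℕ}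
    (hF : (1 + C 2 * X ^ 2) * d⁄dX ℕ F = C s * F + C 3 * X * d⁄dX ℕ F) (n : ℕ) :
    (n + 1) * coeff (n + 1) F ≤ (s + 3 * n) * coeff n F := by
  have hn := congrArg (coeff n) hF
  simp only [add_mul, one_mul, map_add, mul_assoc, coeff_C_mul, coeff_X_pow_mul',
    coeff_derivative] at hn
  rcases n with _ | n
  · simp_all [coeff_zero_X_mul, -coeff_zero_eq_constantCoeff]
  · rw [coeff_succ_X_mul, coeff_derivative] at hn
    push_cast at hn
    split_ifs at hn <;> nlinarith

theorem mul_pow_le_of_succ_mul_le {f : ℕ → ℝ} {s c : ℝ} (hs : 32 ≤ s) (hc₀ : 0 ≤ c)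
    (hc : c ^ 3 ≤ 16) (h₀ : f 0 ≤ 1) (hf : ∀ n : ℕ, (n + 1) * f (n + 1) ≤ (s + 3 * n) * f n)
    (n : ℕ) : f n * c ^ n ≤ 4 * s ^ n := by
  have hc' : c ≤ 2.52 := by
    by_contra! h
    have := pow_lt_pow_left₀ h (by norm_num) three_ne_zero
    norm_num at this
    linarith
  have h₁ : f 1 ≤ s := by
    have := hf 0
    norm_num at this
    nlinarith
  have h₂ : f 2 ≤ (s + 3) * s / 2 := by
    have := (hf 1).trans (mul_le_mul_of_nonneg_left h₁ (by norm_num; linarith))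
    norm_num at this
    linarith
  rcases n with _ | _ | n
  · simpa using h₀.trans (by norm_num)
  · simpa [mul_comm 4 s] using
      mul_le_mul h₁ (hc'.trans (by norm_num : (2.52 : ℝ) ≤ 4)) hc₀ (by linarith)
  induction n with
  | zero =>
    have hc2 : c ^ 2 ≤ 2.52 ^ 2 := pow_le_pow_left₀ hc₀ hc' 2
    calc f 2 * c ^ 2 ≤ (s + 3) * s / 2 * c ^ 2 := by gcongr
      _ ≤ (s + 3) * s / 2 * 2.52 ^ 2 := by gcongr
      _ ≤ 4 * s ^ 2 := by nlinarith
  | succ n ih =>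
    set m : ℕ := n + 2
    have hstep : (s + 3 * m) * c ≤ (m + 1) * s := by
      have : (2 : ℝ) ≤ m := by simp [m]
      nlinarith
    have : ((m : ℝ) + 1) * (f (m + 1) * c ^ (m + 1)) ≤ ((m : ℝ) + 1) * (4 * s ^ (m + 1)) :=
      calc ((m : ℝ) + 1) * (f (m + 1) * c ^ (m + 1)) = (m + 1) * f (m + 1) * c * c ^ m := by ring
        _ ≤ (s + 3 * m) * f m * c * c ^ m := by gcongr ?_ * c * c ^ m; exact hf m
        _ = (s + 3 * m) * c * (f m * c ^ m) := by ring
        _ ≤ (s + 3 * m) * c * (4 * s ^ m) := by gcongr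
        _ ≤ (m + 1) * s * (4 * s ^ m) := by gcongr
        _ = (m + 1) * (4 * s ^ (m + 1)) := by ring
    exact le_of_mul_le_mul_left this (by positivity)

theorem multipartitions_two_pow_le' (a w : ℕ) (ha : 5 ≤ a) :
    (multipartitions (2 ^ a) w : ℝ) ≤ (2 : ℝ) ^ (((a : ℝ) - 4 / 3) * w + 2) := by
  set c : ℝ := 2 ^ (4 / 3 : ℝ)
  have hs : (32 : ℝ) ≤ 2 ^ a := by
    exact_mod_cast (Nat.pow_le_pow_right two_pos ha : 2 ^ 5 ≤ 2 ^ a)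
  have hc : c ^ 3 = 16 := by
    rw [← Real.rpow_natCast, ← Real.rpow_mul zero_le_two]
    norm_num
  have hbound :=
    mul_pow_le_of_succ_mul_le (f := fun n => ((coeff n (compositionSeries ^ 2 ^ a) : ℕ) : ℝ))
      hs (by positivity) hc.le (by simp [constantCoeff_compositionSeries])
      (fun n => by exact_mod_cast succ_mul_coeff_succ_le (compositionSeries_pow_ode (2 ^ a)) n) w
  have hrhs : (2 : ℝ) ^ (((a : ℝ) - 4 / 3) * w + 2) * c ^ w = 4 * (2 ^ a) ^ w := by
    rw [← Real.rpow_mul_natCast zero_le_two, ← Real.rpow_add two_pos, ← pow_mul,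
      ← Real.rpow_natCast]
    ring_nf
    rw [Real.rpow_add two_pos]
    norm_num [mul_comm]
  calc (multipartitions (2 ^ a) w : ℝ) ≤ (coeff w (compositionSeries ^ 2 ^ a) : ℕ) := by
        exact_mod_cast multipartitions_le_coeff_pow (2 ^ a) w
    _ ≤ _ := le_of_mul_le_mul_right (hbound.trans hrhs.symm.le) (by positivity)
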